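/- Let ⟨F, T⟩ be an epistemic causal model over a signature, O any subset of the variables, and S* the corresponding signature with observables O. Suppose that for some A ∈ T, the pair (⟨F, T⟩, A) satisfies, under the semantics without observables ⊨^W, every instance of the axiom scheme (OC) for S*, i.e., [X⃗:=x⃗] ⋁_{o⃗ ∈ R(O)} K(O=o⃗). Then: (1) all valuations in T agree on the values of all variables in O, so ⟨F, T⟩ is an epistemic causal model with observables O; and (2) for every B ∈ T and every L_PAKC formula φ, (⟨F, T⟩, B) satisfies φ under ⊨^W if and only if it satisfies φ under the semantics with observables ⊨^O. -/

import Mathlib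

open Classical

/-- A finite signature: variables sorted into exogenous and endogenous, each with a
finite nonempty range of values. -/
structure Sig : Type 1 where
  Var : Type
  exo : Var → Prop
  Val : Var → Type
  [decEqVar : DecidableEq Var]
  [finVar : Fintype Var]
  [neVar : Nonempty Var]
  [decEqVal : ∀ X : Var, DecidableEq (Val X)]
  [finVal : ∀ X : Var, Fintype (Val X)]
  [neVal : ∀ X : Var, Nonempty (Val X)]

attribute [instance] Sig.decEqVar Sig.finVar Sig.neVar Sig.decEqVal Sig.finVal Sig.neVal

variable {S : Sig}

/-- A valuation: a value for each variable. -/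
abbrev Env (S : Sig) : Type := ∀ X : S.Var, S.Val X

instance : Nonempty (Env S) := ⟨fun X => Classical.arbitrary (S.Val X)⟩

/-- Values for all variables other than `V`. -/
abbrev Others (S : Sig) (V : S.Var) : Type := ∀ X : {X : S.Var // X ≠ V}, S.Val X.val

/-- The restriction of a valuation to the variables other than `V`. -/
def Env.restrict (A : Env S) (V : S.Var) : Others S V := fun X => A X.val

/-- A family of structural functions (only the components at endogenous variables
are meaningful). -/
abbrev StructFuns (S : Sig) : Type := ∀ V : S.Var, Others S V → S.Val V

/-- A valuation complies with the structural functions: the value of each endogenous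
variable is obtained by applying its structural function to the values of all
other variables. -/
def Complies (F : StructFuns S) (A : Env S) : Prop :=
  ∀ V : S.Var, ¬ S.exo V → A V = F V (A.restrict V)

/-- The endogenous variable `V` is directly causally affected by `X` under `F`. -/
def DirAff (F : StructFuns S) (X V : S.Var) : Prop :=
  ¬ S.exo V ∧ ∃ (h : X ≠ V) (g : Others S V) (x₁ x₂ : S.Val X),
    x₁ ≠ x₂ ∧
      F V (Function.update g ⟨X, h⟩ x₁) ≠ F V (Function.update g ⟨X, h⟩ x₂)

/-- `F` is recursive: the transitive closure of the direct causal dependence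
relation is asymmetric (transitivity is automatic for `Relation.TransGen`). -/
def RecursiveF (F : StructFuns S) : Prop :=
  ∀ a b : S.Var, Relation.TransGen (DirAff F) a b → ¬ Relation.TransGen (DirAff F) b a

/-- An assignment of values to a set of pairwise distinct variables. -/
abbrev Intervention (S : Sig) : Type := ∀ X : S.Var, Option (S.Val X)

/-- The empty assignment. -/
def iEmpty (S : Sig) : Intervention S := fun _ => none

/-- Extend an assignment by additionally setting `Y` to `y` (overriding). -/
def iUpd (I : Intervention S) (Y : S.Var) (y : S.Val Y) : Intervention S :=
  Function.update I Y (some y)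

/-- Combine assignments, the second overriding the first:  `[X⃗ := x⃗, Y⃗ := y⃗]`. -/
def icomp (I J : Intervention S) : Intervention S := fun W =>
  match J W with
  | some v => some v
  | none => I W

/-- The intervened family of structural functions: intervened variables get the
constant function returning the assigned value; the rest are unchanged. -/
def intF (F : StructFuns S) (I : Intervention S) : StructFuns S :=
  fun V g => (I V).getD (F V g)

/-- `A'` is the result of intervening with `I` on the valuation `A` (w.r.t. `F`):
exogenous intervened variables get the assigned value, exogenous non-intervened
variables keep their value, and each endogenous variable complies with its new
structural function. -/
def IntervenedVal (F : StructFuns S) (A : Env S) (I : Intervention S) (A' : Env S) : Prop :=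
  (∀ X : S.Var, S.exo X → ∀ v : S.Val X, I X = some v → A' X = v) ∧
  (∀ X : S.Var, S.exo X → I X = none → A' X = A X) ∧
  (∀ V : S.Var, ¬ S.exo V → A' V = intF F I V (A'.restrict V))

/-- The intervened valuation (unique when `F` is recursive). -/
noncomputable def intVal (F : StructFuns S) (A : Env S) (I : Intervention S) : Env S :=
  Classical.epsilon (IntervenedVal F A I)

/-- The language L_PAKC: atoms `Y = y`, negation, conjunction, knowledge,
public announcements, and interventionist counterfactual operators. -/
inductive Form (S : Sig) : Type where
  | eq (Y : S.Var) (y : S.Val Y) : Form S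
  | neg (φ : Form S) : Form S
  | conj (φ ψ : Form S) : Form S
  | know (φ : Form S) : Form S
  | ann (α φ : Form S) : Form S
  | int (I : Intervention S) (φ : Form S) : Form S

namespace Form

/-- Material implication, defined from `¬` and `∧` as usual. -/
def impl (φ ψ : Form S) : Form S := Form.neg (Form.conj φ (Form.neg ψ))

/-- Disjunction, defined from `¬` and `∧` as usual. -/
def orF (φ ψ : Form S) : Form S := Form.neg (Form.conj (Form.neg φ) (Form.neg ψ))

/-- Biconditional. -/
def iffF (φ ψ : Form S) : Form S := Form.conj (impl φ ψ) (impl ψ φ)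

end Form

/-- A canonical contradiction. -/
noncomputable def botF (S : Sig) : Form S :=
  let X : S.Var := Classical.arbitrary S.Var
  let x : S.Val X := Classical.arbitrary (S.Val X)
  Form.conj (Form.eq X x) (Form.neg (Form.eq X x))

/-- A canonical tautology. -/
noncomputable def topF (S : Sig) : Form S := Form.neg (botF S)

/-- Disjunction of a list of formulas (the empty disjunction is a contradiction). -/
noncomputable def bigOr : List (Form S) → Form S
  | [] => botF S
  | φ :: l => l.foldl Form.orF φ

/-- Conjunction of a list of formulas (the empty conjunction is a tautology). -/
noncomputable def bigConj : List (Form S) → Form S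
  | [] => topF S
  | φ :: l => l.foldl Form.conj φ

/-- `φ` is an instance of a propositional tautology: it evaluates to `true` under
every Boolean valuation that respects negation and conjunction (treating all
other formulas as atoms). -/
def Tauto (φ : Form S) : Prop :=
  ∀ v : Form S → Bool,
    (∀ ψ : Form S, v (Form.neg ψ) = !(v ψ)) →
    (∀ ψ χ : Form S, v (Form.conj ψ χ) = (v ψ && v χ)) →
    v φ = true

/-- The assignment `[Z⃗ := z⃗, X := x]` where `Z⃗` lists all variables other than
`X` and `V`, used in the formula `X ⇝ V`. -/
def ltInt (X V : S.Var) (g : ∀ W : {W : S.Var // W ≠ X ∧ W ≠ V}, S.Val W.val)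
    (x : S.Val X) : Intervention S := fun W =>
  if h : W = X then some (h.symm ▸ x)
  else if h' : W = V then none
  else some (g ⟨W, ⟨h, h'⟩⟩)

/-- The formula `X ⇝ V`: the disjunction, over tuples `z⃗` of values for all
variables other than `X` and `V`, distinct values `x₁ ≠ x₂` of `X` and distinct
values `v₁ ≠ v₂` of `V`, of `[Z⃗:=z⃗, X:=x₁]V=v₁ ∧ [Z⃗:=z⃗, X:=x₂]V=v₂`. -/
noncomputable def leadsTo (X V : S.Var) : Form S :=
  bigOr ((Finset.univ.filter
      (fun p : (∀ W : {W : S.Var // W ≠ X ∧ W ≠ V}, S.Val W.val) ×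
          (S.Val X × S.Val X) × (S.Val V × S.Val V) =>
        p.2.1.1 ≠ p.2.1.2 ∧ p.2.2.1 ≠ p.2.2.2)).toList.map
    (fun p =>
      Form.conj
        (Form.int (ltInt X V p.1 p.2.1.1) (Form.eq V p.2.2.1))
        (Form.int (ltInt X V p.1 p.2.1.2) (Form.eq V p.2.2.2))))

/-- The chain `X₀ ⇝ X₁ ∧ ⋯ ∧ X_k ⇝ X_{k+1}`. -/
noncomputable def chainConj (X : ℕ → S.Var) : ℕ → Form S
  | 0 => leadsTo (X 0) (X 1)
  | n + 1 => Form.conj (chainConj X n) (leadsTo (X (n + 1)) (X (n + 2)))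

/-- `ψ₁ → (ψ₂ → ⋯ → (ψₙ → φ))` for a list of premises. -/
def impsFrom : List (Form S) → Form S → Form S
  | [], φ => φ
  | ψ :: l, φ => Form.impl ψ (impsFrom l φ)

/-- Satisfaction of an L_PAKC formula at a pointed epistemic causal model
`(⟨F, T⟩, A)` (the semantics `⊨ᵂ`, without observables). -/
def SatW : Form S → StructFuns S → Set (Env S) → Env S → Prop
  | Form.eq Y y, _, _, A => A Y = y
  | Form.neg φ, F, T, A => ¬ SatW φ F T A
  | Form.conj φ ψ, F, T, A => SatW φ F T A ∧ SatW ψ F T A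
  | Form.know φ, F, T, _ => ∀ B ∈ T, SatW φ F T B
  | Form.ann α φ, F, T, A =>
      SatW α F T A → SatW φ F {B | B ∈ T ∧ SatW α F T B} A
  | Form.int I φ, F, T, A =>
      SatW φ (intF F I) ((fun B => intVal F B I) '' T) (intVal F A I)

/-- Satisfaction of an L_PAKC formula at a pointed epistemic causal model with
observables `Obs` (the semantics `⊨ᴼ`): after an intervention, the epistemic
state retains only those intervened valuations that agree with the intervened
actual valuation on all observables. -/
def SatO (Obs : Finset S.Var) : Form S → StructFuns S → Set (Env S) → Env S → Prop
  | Form.eq Y y, _, _, A => A Y = y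
  | Form.neg φ, F, T, A => ¬ SatO Obs φ F T A
  | Form.conj φ ψ, F, T, A => SatO Obs φ F T A ∧ SatO Obs ψ F T A
  | Form.know φ, F, T, _ => ∀ B ∈ T, SatO Obs φ F T B
  | Form.ann α φ, F, T, A =>
      SatO Obs α F T A → SatO Obs φ F {B | B ∈ T ∧ SatO Obs α F T B} A
  | Form.int I φ, F, T, A =>
      SatO Obs φ (intF F I)
        {B' | ∃ B ∈ T, B' = intVal F B I ∧ ∀ W ∈ Obs, B' W = intVal F A I W}
        (intVal F A I)

/-- The formula `O⃗ = o⃗`: the conjunction of `O = o⃗(O)` over the observables. -/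
noncomputable def obsEq (Obs : Finset S.Var)
    (o : ∀ W : {W : S.Var // W ∈ Obs}, S.Val W.val) : Form S :=
  bigConj (Obs.attach.toList.map (fun W => Form.eq W.val (o W)))

/-- All tuples of values for the observables (an enumeration of `R(O⃗)`). -/
noncomputable def obsTuples (Obs : Finset S.Var) :
    List (∀ W : {W : S.Var // W ∈ Obs}, S.Val W.val) :=
  (Finset.univ : Finset (∀ W : {W : S.Var // W ∈ Obs}, S.Val W.val)).toList

/-- Axiom (OC): `[X⃗:=x⃗] ⋁_{o⃗ ∈ R(O⃗)} K(O⃗=o⃗)`. -/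
noncomputable def ocForm (Obs : Finset S.Var) (I : Intervention S) : Form S :=
  Form.int I (bigOr ((obsTuples Obs).map (fun o => Form.know (obsEq Obs o))))

/-- Axiom (PD): `[X⃗:=x⃗]Kψ ↔ ⋁_{o⃗ ∈ R(O⃗)} ([X⃗:=x⃗]O⃗=o⃗ ∧ [[X⃗:=x⃗]O⃗=o⃗ !] K[X⃗:=x⃗]ψ)`. -/
noncomputable def pdForm (Obs : Finset S.Var) (I : Intervention S) (ψ : Form S) : Form S :=
  Form.iffF (Form.int I (Form.know ψ))
    (bigOr ((obsTuples Obs).map (fun o =>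
      Form.conj (Form.int I (obsEq Obs o))
        (Form.ann (Form.int I (obsEq Obs o)) (Form.know (Form.int I ψ))))))

/-! Recursive structural equations have a unique solution for any exogenous values, so
intervening with `I` and then with `J` is intervening with `[I, J]`. The (OC) instance for `I`
says that after `I` every observable is known, i.e. all intervened valuations of `T` agree on
it; for the empty intervention this is (1). That agreement survives announcements (which
shrink `T`) and further interventions (by composition), so the observable filter in the
intervention clause of `⊨ᴼ` never removes a valuation, and the two semantics agree by
induction on the formula. -/

lemma eq_of_forall_update_eq_of_eqOn {ι γ : Type*} [Fintype ι] [DecidableEq ι]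
    {β : ι → Type*} (f : (∀ i, β i) → γ) (P : ι → Prop)
    (hf : ∀ i, ¬ P i → ∀ g x, f (Function.update g i x) = f g)
    {g h : ∀ i, β i} (hgh : ∀ i, P i → g i = h i) : f g = f h := by
  suffices key : ∀ s : Finset ι, f (s.piecewise h g) = f g by
    simpa using (key Finset.univ).symm
  intro s
  induction s using Finset.induction_on with
  | empty => simp
  | insert i s hi ih =>
    rw [Finset.piecewise_insert]
    by_cases hPi : P i
    · rwa [← hgh i hPi, ← Finset.piecewise_eq_of_notMem s h g hi, Function.update_eq_self]
    · rwa [hf i hPi]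

namespace RecursiveF

variable {F : StructFuns S}

lemma apply_eq_of_dirAff {V : S.Var} (hV : ¬ S.exo V) {g h : Others S V}
    (hgh : ∀ X : {X : S.Var // X ≠ V}, DirAff F X V → g X = h X) : F V g = F V h := by
  refine eq_of_forall_update_eq_of_eqOn (F V) (fun X => DirAff F X V) ?_ hgh
  intro X hX g x
  by_contra hne
  refine hX ⟨hV, X.2, g, x, g X, ?_, ?_⟩
  · rintro rfl
    simp at hne
  · simpa using hne

lemma wellFounded (hF : RecursiveF F) : WellFounded (Relation.TransGen (DirAff F)) :=
  have : Std.Irrefl (Relation.TransGen (DirAff F)) := ⟨fun a h => hF a a h h⟩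
  Finite.wellFounded_of_trans_of_irrefl _

lemma eq_of_complies (hF : RecursiveF F) {A B : Env S} (hA : Complies F A)
    (hB : Complies F B) (hexo : ∀ X, S.exo X → A X = B X) : A = B := by
  funext V
  induction V using hF.wellFounded.induction with
  | _ V ih =>
    by_cases hV : S.exo V
    · exact hexo V hV
    · rw [hA V hV, hB V hV]
      exact apply_eq_of_dirAff hV fun X hX => ih X (.single hX)

lemma exists_complies (hF : RecursiveF F) (e : Env S) :
    ∃ A, (∀ X, S.exo X → A X = e X) ∧ Complies F A := by
  let A : Env S := hF.wellFounded.fix fun V ih =>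
    if S.exo V then e V
    else F V fun X =>
      if hX : Relation.TransGen (DirAff F) X V then ih X hX else Classical.arbitrary _
  have hA : ∀ V, A V = if S.exo V then e V
      else F V fun X => if Relation.TransGen (DirAff F) X V then A X else Classical.arbitrary _ :=
    fun V => hF.wellFounded.fix_eq _ V
  refine ⟨A, fun X hX => by rw [hA, if_pos hX], fun V hV => ?_⟩
  rw [hA, if_neg hV]
  exact apply_eq_of_dirAff hV fun X hX => if_pos (.single hX)

lemma dirAff_of_dirAff_intF {I : Intervention S} {X V : S.Var}
    (h : DirAff (intF F I) X V) : DirAff F X V := by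
  obtain ⟨hV, hXV, g, x₁, x₂, hx, hne⟩ := h
  refine ⟨hV, hXV, g, x₁, x₂, hx, fun heq => hne ?_⟩
  simp only [intF, heq]

lemma intervene (hF : RecursiveF F) (I : Intervention S) : RecursiveF (intF F I) :=
  fun a b hab hba => hF a b (Relation.TransGen.mono (fun _ _ => dirAff_of_dirAff_intF) a b hab)
    (Relation.TransGen.mono (fun _ _ => dirAff_of_dirAff_intF) b a hba)

end RecursiveF

lemma getD_icomp (I J : Intervention S) (X : S.Var) (a : S.Val X) :
    (icomp I J X).getD a = (J X).getD ((I X).getD a) := by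
  unfold icomp
  cases J X <;> rfl

lemma intF_icomp (F : StructFuns S) (I J : Intervention S) :
    intF (intF F I) J = intF F (icomp I J) := by
  funext V g
  simp only [intF, getD_icomp]

lemma intervenedVal_iff {F : StructFuns S} {A A' : Env S} {I : Intervention S} :
    IntervenedVal F A I A' ↔
      (∀ X, S.exo X → A' X = (I X).getD (A X)) ∧ Complies (intF F I) A' := by
  refine ⟨fun ⟨hsome, hnone, hcomp⟩ => ⟨fun X hX => ?_, hcomp⟩, fun ⟨hexo, hcomp⟩ => ?_⟩
  · cases hI : I X with
    | some v => exact hsome X hX v hI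
    | none => exact hnone X hX hI
  · exact ⟨fun X hX v hI => by simpa [hI] using hexo X hX,
      fun X hX hI => by simpa [hI] using hexo X hX, hcomp⟩

section Intervention

variable {F : StructFuns S}

lemma intVal_spec (hF : RecursiveF F) (A : Env S) (I : Intervention S) :
    IntervenedVal F A I (intVal F A I) :=
  Classical.epsilon_spec <| (hF.intervene I).exists_complies (fun X => (I X).getD (A X))
    |>.imp fun _ => intervenedVal_iff.2

lemma intVal_eq (hF : RecursiveF F) {A A' : Env S} {I : Intervention S}
    (h : IntervenedVal F A I A') : intVal F A I = A' := by
  obtain ⟨hexo, hcomp⟩ := intervenedVal_iff.1 (intVal_spec hF A I)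
  obtain ⟨hexo', hcomp'⟩ := intervenedVal_iff.1 h
  exact (hF.intervene I).eq_of_complies hcomp hcomp' fun X hX => (hexo X hX).trans (hexo' X hX).symm

lemma intVal_iEmpty (hF : RecursiveF F) {A : Env S} (hA : Complies F A) :
    intVal F A (iEmpty S) = A :=
  intVal_eq hF <| intervenedVal_iff.2 ⟨fun _ _ => rfl, hA⟩

lemma intVal_intVal (hF : RecursiveF F) (A : Env S) (I J : Intervention S) :
    intVal (intF F I) (intVal F A I) J = intVal F A (icomp I J) := by
  obtain ⟨hexoI, -⟩ := intervenedVal_iff.1 (intVal_spec hF A I)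
  obtain ⟨hexoIJ, hcompIJ⟩ := intervenedVal_iff.1 (intVal_spec hF A (icomp I J))
  refine intVal_eq (hF.intervene I) (intervenedVal_iff.2 ⟨fun X hX => ?_, ?_⟩)
  · rw [hexoIJ X hX, hexoI X hX, getD_icomp]
  · rwa [intF_icomp]

end Intervention

section Semantics

variable {F : StructFuns S} {T : Set (Env S)} {A : Env S}

lemma satW_foldl_orF (l : List (Form S)) (φ : Form S) :
    SatW (l.foldl Form.orF φ) F T A ↔ SatW φ F T A ∨ ∃ ψ ∈ l, SatW ψ F T A := by
  induction l generalizing φ with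
  | nil => simp
  | cons ψ l ih =>
    simp only [List.foldl_cons, ih, Form.orF, SatW, List.mem_cons, exists_eq_or_imp]
    tauto

lemma satW_bigOr (l : List (Form S)) : SatW (bigOr l) F T A ↔ ∃ φ ∈ l, SatW φ F T A := by
  cases l with
  | nil => simp [bigOr, botF, SatW]
  | cons φ l => simp [bigOr, satW_foldl_orF]

lemma satW_foldl_conj (l : List (Form S)) (φ : Form S) :
    SatW (l.foldl Form.conj φ) F T A ↔ SatW φ F T A ∧ ∀ ψ ∈ l, SatW ψ F T A := by
  induction l generalizing φ with
  | nil => simp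
  | cons ψ l ih => simp [ih, SatW, and_assoc]

lemma satW_bigConj (l : List (Form S)) : SatW (bigConj l) F T A ↔ ∀ φ ∈ l, SatW φ F T A := by
  cases l with
  | nil => simp [bigConj, topF, botF, SatW]
  | cons φ l => simp [bigConj, satW_foldl_conj]

lemma satW_obsEq {Obs : Finset S.Var} {o : ∀ W : {W : S.Var // W ∈ Obs}, S.Val W.val} :
    SatW (obsEq Obs o) F T A ↔ ∀ W (hW : W ∈ Obs), A W = o ⟨W, hW⟩ := by
  simp only [obsEq, satW_bigConj, List.forall_mem_map, Finset.mem_toList, Finset.mem_attach,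
    forall_const, SatW, Subtype.forall]

end Semantics

def ObsAgreeUnderInt (Obs : Finset S.Var) (F : StructFuns S) (T : Set (Env S)) : Prop :=
  ∀ I : Intervention S, ∀ B ∈ T, ∀ C ∈ T, ∀ W ∈ Obs, intVal F B I W = intVal F C I W

namespace ObsAgreeUnderInt

variable {Obs : Finset S.Var} {F : StructFuns S} {T : Set (Env S)}

lemma mono (h : ObsAgreeUnderInt Obs F T) {T' : Set (Env S)} (hT' : T' ⊆ T) :
    ObsAgreeUnderInt Obs F T' :=
  fun I B hB C hC => h I B (hT' hB) C (hT' hC)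

lemma intervene (hF : RecursiveF F) (h : ObsAgreeUnderInt Obs F T) (I : Intervention S) :
    ObsAgreeUnderInt Obs (intF F I) ((fun B => intVal F B I) '' T) := by
  rintro J _ ⟨B, hB, rfl⟩ _ ⟨C, hC, rfl⟩
  rw [intVal_intVal hF, intVal_intVal hF]
  exact h (icomp I J) B hB C hC

lemma obsFilter_eq_image (h : ObsAgreeUnderInt Obs F T) {A : Env S} (hA : A ∈ T)
    (I : Intervention S) :
    {B' | ∃ B ∈ T, B' = intVal F B I ∧ ∀ W ∈ Obs, B' W = intVal F A I W} =
      (fun B => intVal F B I) '' T := by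
  ext B'
  constructor
  · rintro ⟨B, hB, rfl, -⟩
    exact ⟨B, hB, rfl⟩
  · rintro ⟨B, hB, rfl⟩
    exact ⟨B, hB, rfl, h I B hB A hA⟩

lemma satW_iff_satO (hF : RecursiveF F) (h : ObsAgreeUnderInt Obs F T) (φ : Form S)
    {B : Env S} (hB : B ∈ T) : SatW φ F T B ↔ SatO Obs φ F T B := by
  induction φ generalizing F T B with
  | eq Y y => rfl
  | neg φ ih => exact not_congr (ih hF h hB)
  | conj φ ψ ihφ ihψ => exact and_congr (ihφ hF h hB) (ihψ hF h hB)
  | know φ ih => exact forall₂_congr fun C hC => ih hF h hC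
  | ann α φ ihα ihφ =>
    have hann : {C | C ∈ T ∧ SatW α F T C} = {C | C ∈ T ∧ SatO Obs α F T C} :=
      Set.ext fun C => and_congr_right fun hC => ihα hF h hC
    simp only [SatW, SatO, ← hann]
    have hα := ihα hF h hB
    exact imp_congr_ctx hα fun hαW => ihφ hF (h.mono fun _ => And.left) ⟨hB, hα.2 hαW⟩
  | int I φ ih =>
    simp only [SatW, SatO, h.obsFilter_eq_image hB]
    exact ih (hF.intervene I) (h.intervene hF I) ⟨B, hB, rfl⟩

end ObsAgreeUnderInt

lemma obsAgreeUnderInt_of_satW_ocForm {Obs : Finset S.Var} {F : StructFuns S}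
    {T : Set (Env S)} {A : Env S} (hOC : ∀ I, SatW (ocForm Obs I) F T A) :
    ObsAgreeUnderInt Obs F T := by
  intro I B hB C hC W hW
  obtain ⟨_, hmem, hK⟩ := (satW_bigOr _).1 (hOC I)
  obtain ⟨o, -, rfl⟩ := List.mem_map.1 hmem
  exact (satW_obsEq.1 (hK _ ⟨B, hB, rfl⟩) W hW).trans (satW_obsEq.1 (hK _ ⟨C, hC, rfl⟩) W hW).symm

theorem oc_models_have_observables_general (S : Sig) (Obs : Finset S.Var)
    (F : StructFuns S) (T : Set (Env S))
    (hRec : RecursiveF F) (hComp : ∀ B ∈ T, Complies F B)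
    (A : Env S)
    (hOC : ∀ I : Intervention S, SatW (ocForm Obs I) F T A) :
    (∀ B ∈ T, ∀ C ∈ T, ∀ W ∈ Obs, B W = C W) ∧
      (∀ B ∈ T, ∀ φ : Form S, (SatW φ F T B ↔ SatO Obs φ F T B)) := by
  have hagree := obsAgreeUnderInt_of_satW_ocForm hOC
  refine ⟨fun B hB C hC W hW => ?_, fun B hB φ => hagree.satW_iff_satO hRec φ hB⟩
  simpa only [intVal_iEmpty hRec (hComp B hB), intVal_iEmpty hRec (hComp C hC)] using
    hagree (iEmpty S) B hB C hC W hW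

/-- Theorem: let `⟨F, T⟩` be an epistemic causal model and `Obs` any set of
variables.  If some pointed model `(⟨F, T⟩, A)` satisfies every instance of the
axiom scheme (OC) for the signature with observables `Obs` under the semantics
without observables `⊨ᵂ`, then (1) all valuations of `T` agree on the values of
all observables, so `⟨F, T⟩` is an epistemic causal model with observables `Obs`,
and (2) at every point of `T`, the two semantics `⊨ᵂ` and `⊨ᴼ` agree on every
L_PAKC formula. -/
theorem oc_models_have_observables (S : Sig) (Obs : Finset S.Var)
    (F : StructFuns S) (T : Set (Env S))
    (hRec : RecursiveF F) (hne : T.Nonempty) (hComp : ∀ B ∈ T, Complies F B)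
    (A : Env S) (hA : A ∈ T)
    (hOC : ∀ I : Intervention S, SatW (ocForm Obs I) F T A) :
    (∀ B ∈ T, ∀ C ∈ T, ∀ W ∈ Obs, B W = C W) ∧
      (∀ B ∈ T, ∀ φ : Form S, (SatW φ F T B ↔ SatO Obs φ F T B)) :=
  oc_models_have_observables_general S Obs F T hRec hComp A hOC
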